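/- arXiv:2008.01467 — 3 statements merged into one kernel-verified Lean document; each statement's English description precedes it below -/
import Mathlib

section
/- Let Q ⊂ (0,∞) × ℝ be open, Ã ∈ C²(Q̄), φ̃ ∈ C²(Q̄), B̃ : Q̄ → ℝ³ with B̃₁ = r⁻¹∂_z Ã, B̃₃ = -r⁻¹∂_r Ã (B̃₂ arbitrary continuous), and constants q ≠ 0, m > 0, c > 0. Then I(r,z,w) = Ã(r,z) - (cm/q) r w₂ is a first integral of the system ṙ = w₁, ż = w₃, ẇ = -(q/m)(∂_r φ̃, 0, ∂_z φ̃) + (q/(cm)) w × B̃(r,z) + (w₂/r)(w₂, -w₁, 0). -/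
/-!
Along a characteristic, `d/dt Ã(r,z) = ṙ ∂_r Ã + ż ∂_z Ã`. For the canonical angular momentum
`r w₂`, the centrifugal term `-(w₂/r) w₁` in `ẇ₂` cancels the term `ṙ w₂` of the product rule,
leaving `d/dt (r w₂) = (q/(cm)) r (w₃ B̃₁ - w₁ B̃₃) = (q/(cm)) (w₃ ∂_z Ã + w₁ ∂_r Ã)`.
So the two derivatives agree up to the factor `cm/q`, and `I` is conserved.
-/

theorem HasFDerivAt.comp_hasDerivAt_prodMk {f : ℝ × ℝ → ℝ} {f' : (ℝ × ℝ) →L[ℝ] ℝ}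
    {x y : ℝ → ℝ} {x' y' t : ℝ} (hf : HasFDerivAt f f' (x t, y t))
    (hx : HasDerivAt x x' t) (hy : HasDerivAt y y' t) :
    HasDerivAt (fun s => f (x s, y s)) (x' * f' (1, 0) + y' * f' (0, 1)) t := by
  have hxy : ((x', y') : ℝ × ℝ) = x' • ((1 : ℝ), (0 : ℝ)) + y' • ((0 : ℝ), (1 : ℝ)) := by
    simp
  have h := hf.comp_hasDerivAt t (hx.prodMk hy)
  rwa [hxy, map_add, map_smul, map_smul] at h

theorem HasDerivAt.mul_of_hasDerivAt_add_div_mul {r v : ℝ → ℝ} {u F t : ℝ} (hr0 : r t ≠ 0)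
    (hr : HasDerivAt r u t) (hv : HasDerivAt v (F + v t / r t * -u) t) :
    HasDerivAt (fun s => r s * v s) (r t * F) t :=
  (hr.mul hv).congr_deriv (by field_simp; ring)

theorem stmt3_general (Q : Set (ℝ × ℝ)) (hQpos : ∀ p ∈ Q, 0 < p.1)
    (A : ℝ × ℝ → ℝ) (A' φ' : ℝ × ℝ → (ℝ × ℝ) →L[ℝ] ℝ)
    (hA : ∀ p ∈ Q, HasFDerivAt A (A' p) p)
    (B₂ : ℝ × ℝ → ℝ)
    (B : ℝ × ℝ → (Fin 3 → ℝ))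
    (hB : ∀ p : ℝ × ℝ, B p = ![p.1⁻¹ * A' p (0, 1), B₂ p, -(p.1⁻¹ * A' p (1, 0))])
    (q m c : ℝ) (hq : q ≠ 0) (hm : 0 < m) (hc : 0 < c)
    (r z : ℝ → ℝ) (w : ℝ → (Fin 3 → ℝ)) (t : ℝ)
    (ht : (r t, z t) ∈ Q)
    (hr : HasDerivAt r (w t 0) t) (hz : HasDerivAt z (w t 2) t)
    (hw : HasDerivAt w
      (![-(q / m) * φ' (r t, z t) (1, 0)
          + q / (c * m) * (w t 1 * B (r t, z t) 2 - w t 2 * B (r t, z t) 1)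
          + (w t 1 / r t) * w t 1,
         q / (c * m) * (w t 2 * B (r t, z t) 0 - w t 0 * B (r t, z t) 2)
          + (w t 1 / r t) * (-(w t 0)),
         -(q / m) * φ' (r t, z t) (0, 1)
          + q / (c * m) * (w t 0 * B (r t, z t) 1 - w t 1 * B (r t, z t) 0)]) t) :
    HasDerivAt (fun s => A (r s, z s) - (c * m / q) * (r s * w s 1)) 0 t := by
  have hrt : r t ≠ 0 := (hQpos _ ht).ne'
  have hAt := (hA _ ht).comp_hasDerivAt_prodMk hr hz
  have hw₁ : HasDerivAt (fun s => w s 1)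
      (q / (c * m) * (w t 2 * B (r t, z t) 0 - w t 0 * B (r t, z t) 2)
        + (w t 1 / r t) * (-(w t 0))) t := by
    simpa using hasDerivAt_pi.mp hw 1
  have hL := hr.mul_of_hasDerivAt_add_div_mul hrt hw₁
  refine (hAt.sub (hL.const_mul (c * m / q))).congr_deriv ?_
  rw [hB]
  simp only [Matrix.cons_val_zero, Matrix.cons_val_two, Matrix.tail_cons, Matrix.head_cons]
  field_simp
  ring

/-- `I(r,z,w) = Ã(r,z) - (cm/q) r w₂` is a first integral of the reduced characteristic
system in the toroidally symmetric case. -/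
theorem stmt3 (Q : Set (ℝ × ℝ)) (hQ : IsOpen Q) (hQpos : ∀ p ∈ Q, 0 < p.1)
    (A φ : ℝ × ℝ → ℝ) (A' φ' : ℝ × ℝ → (ℝ × ℝ) →L[ℝ] ℝ)
    (hA : ∀ p ∈ Q, HasFDerivAt A (A' p) p)
    (hφ : ∀ p ∈ Q, HasFDerivAt φ (φ' p) p)
    (B₂ : ℝ × ℝ → ℝ) (hB₂ : Continuous B₂)
    (B : ℝ × ℝ → (Fin 3 → ℝ))
    (hB : ∀ p : ℝ × ℝ, B p = ![p.1⁻¹ * A' p (0, 1), B₂ p, -(p.1⁻¹ * A' p (1, 0))])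
    (q m c : ℝ) (hq : q ≠ 0) (hm : 0 < m) (hc : 0 < c)
    (r z : ℝ → ℝ) (w : ℝ → (Fin 3 → ℝ)) (t : ℝ)
    (ht : (r t, z t) ∈ Q)
    (hr : HasDerivAt r (w t 0) t) (hz : HasDerivAt z (w t 2) t)
    (hw : HasDerivAt w
      (![-(q / m) * φ' (r t, z t) (1, 0)
          + q / (c * m) * (w t 1 * B (r t, z t) 2 - w t 2 * B (r t, z t) 1)
          + (w t 1 / r t) * w t 1,
         q / (c * m) * (w t 2 * B (r t, z t) 0 - w t 0 * B (r t, z t) 2)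
          + (w t 1 / r t) * (-(w t 0)),
         -(q / m) * φ' (r t, z t) (0, 1)
          + q / (c * m) * (w t 0 * B (r t, z t) 1 - w t 1 * B (r t, z t) 0)]) t) :
    HasDerivAt (fun s => A (r s, z s) - (c * m / q) * (r s * w s 1)) 0 t :=
  stmt3_general Q hQpos A A' φ' hA B₂ B hB q m c hq hm hc r z w t ht hr hz hw
end

section
/- Let a ∈ C¹([-l,l]) and φ ∈ C²(Ω̄) with Ω = B_{r₀}(0) × (-l,l) ⊂ ℝ³ such that φ(x) depends only on (|x'|, x₃) where x' = (x₁,x₂). Let q ≠ 0, m > 0, c > 0. Then I(x,v) = (a(x₃)/2)(x₁² + x₂²) + (cm/q)(x₁v₂ - x₂v₁) is a first integral of the system ẋ = v, v̇ = -(q/m)∇φ(x) + (q/(cm))(a(x₃)v₂ + ½a'(x₃)x₂v₃, -a(x₃)v₁ - ½a'(x₃)x₁v₃, ½a'(x₃)(x₁v₂ - x₂v₁)). -/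
/-!
Rotating a point `y` about the `x₃`-axis keeps `x₁² + x₂²` and `x₃` fixed, so an axially
symmetric `φ` is constant along the orbit; differentiating at angle `0` gives the vanishing of the
angular derivative `y₁ ∂₂φ(y) - y₂ ∂₁φ(y)`. Along a trajectory, the derivative of
`(a/2)(x₁² + x₂²)` cancels the magnetic part of `(cm/q) d/dt (x₁v₂ - x₂v₁)`, and what is left is a
multiple of that angular derivative.
-/

open Real

noncomputable def rotateAboutAxis (θ : ℝ) (y : Fin 3 → ℝ) : Fin 3 → ℝ :=
  ![y 0 * cos θ - y 1 * sin θ, y 0 * sin θ + y 1 * cos θ, y 2]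

@[simp]
lemma rotateAboutAxis_zero (y : Fin 3 → ℝ) : rotateAboutAxis 0 y = y := by
  funext i; fin_cases i <;> simp [rotateAboutAxis]

lemma rotateAboutAxis_sq_add_sq (θ : ℝ) (y : Fin 3 → ℝ) :
    rotateAboutAxis θ y 0 ^ 2 + rotateAboutAxis θ y 1 ^ 2 = y 0 ^ 2 + y 1 ^ 2 := by
  simp only [rotateAboutAxis, Matrix.cons_val_zero, Matrix.cons_val_one]
  linear_combination (y 0 ^ 2 + y 1 ^ 2) * sin_sq_add_cos_sq θ

lemma hasDerivAt_rotateAboutAxis (y : Fin 3 → ℝ) :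
    HasDerivAt (fun θ => rotateAboutAxis θ y) ![-y 1, y 0, 0] 0 := by
  refine hasDerivAt_pi.mpr fun i => ?_
  fin_cases i
  · simpa [rotateAboutAxis, Pi.sub_def] using
      ((hasDerivAt_cos 0).const_mul (y 0)).sub ((hasDerivAt_sin 0).const_mul (y 1))
  · simpa [rotateAboutAxis, Pi.add_def] using
      ((hasDerivAt_sin 0).const_mul (y 0)).add ((hasDerivAt_cos 0).const_mul (y 1))
  · exact hasDerivAt_const _ _

lemma angular_fderiv_eq_zero {φ : (Fin 3 → ℝ) → ℝ} {φ' : (Fin 3 → ℝ) →L[ℝ] ℝ}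
    {y : Fin 3 → ℝ} (hφ : HasFDerivAt φ φ' y) (hinv : ∀ θ, φ (rotateAboutAxis θ y) = φ y) :
    y 0 * φ' (Pi.single 1 1) - y 1 * φ' (Pi.single 0 1) = 0 := by
  have hderiv : HasDerivAt (fun θ => φ (rotateAboutAxis θ y)) (φ' ![-y 1, y 0, 0]) 0 := by
    rw [← rotateAboutAxis_zero y] at hφ
    exact hφ.comp_hasDerivAt 0 (hasDerivAt_rotateAboutAxis y)
  simp only [hinv] at hderiv
  have hvec : (![-y 1, y 0, 0] : Fin 3 → ℝ) = y 0 • Pi.single 1 1 - y 1 • Pi.single 0 1 := by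
    funext i; fin_cases i <;> simp
  rw [← hderiv.unique (hasDerivAt_const 0 (φ y)), hvec, map_sub, map_smul, map_smul,
    smul_eq_mul, smul_eq_mul]

theorem stmt5_general (r₀ l : ℝ)
    (a a' : ℝ → ℝ) (ha : ∀ s ∈ Set.Icc (-l) l, HasDerivAt a (a' s) s)
    (φ : (Fin 3 → ℝ) → ℝ)
    (hsym : ∀ x y : Fin 3 → ℝ,
      x 0 ^ 2 + x 1 ^ 2 ≤ r₀ ^ 2 → y 0 ^ 2 + y 1 ^ 2 ≤ r₀ ^ 2 →
      x 2 ∈ Set.Icc (-l) l → y 2 ∈ Set.Icc (-l) l →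
      x 0 ^ 2 + x 1 ^ 2 = y 0 ^ 2 + y 1 ^ 2 → x 2 = y 2 → φ x = φ y)
    (φ' : (Fin 3 → ℝ) → (Fin 3 → ℝ) →L[ℝ] ℝ)
    (hφ : ∀ y : Fin 3 → ℝ, y 0 ^ 2 + y 1 ^ 2 < r₀ ^ 2 → y 2 ∈ Set.Ioo (-l) l →
      HasFDerivAt φ (φ' y) y)
    (q m c : ℝ) (hq : q ≠ 0) (hm : 0 < m) (hc : 0 < c)
    (x v : ℝ → (Fin 3 → ℝ)) (t : ℝ)
    (hxQ : x t 0 ^ 2 + x t 1 ^ 2 < r₀ ^ 2) (hxz : x t 2 ∈ Set.Ioo (-l) l)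
    (hx : HasDerivAt x (v t) t)
    (hv : HasDerivAt v
      (![-(q / m) * φ' (x t) (Pi.single 0 1)
          + q / (c * m) * (a (x t 2) * v t 1 + (1/2) * a' (x t 2) * x t 1 * v t 2),
         -(q / m) * φ' (x t) (Pi.single 1 1)
          + q / (c * m) * (-(a (x t 2) * v t 0) - (1/2) * a' (x t 2) * x t 0 * v t 2),
         -(q / m) * φ' (x t) (Pi.single 2 1)
          + q / (c * m) * ((1/2) * a' (x t 2) * (x t 0 * v t 1 - x t 1 * v t 0))]) t) :
    HasDerivAt (fun s => a (x s 2) / 2 * (x s 0 ^ 2 + x s 1 ^ 2)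
      + c * m / q * (x s 0 * v s 1 - x s 1 * v s 0)) 0 t := by
  have hxz' := Set.mem_Icc_of_Ioo hxz
  have hangular := angular_fderiv_eq_zero (hφ (x t) hxQ hxz) fun θ =>
    hsym _ _ ((rotateAboutAxis_sq_add_sq θ _).trans_le hxQ.le) hxQ.le hxz' hxz'
      (rotateAboutAxis_sq_add_sq θ _) rfl
  have hx_comp := hasDerivAt_pi.mp hx
  have hv_comp := hasDerivAt_pi.mp hv
  have hv0 := hv_comp 0
  have hv1 := hv_comp 1
  simp only [Matrix.cons_val_zero, Matrix.cons_val_one] at hv0 hv1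
  have ha_x := (ha (x t 2) hxz').comp t (hx_comp 2)
  refine HasDerivAt.congr_deriv
    (((ha_x.div_const 2).mul (((hx_comp 0).pow 2).add ((hx_comp 1).pow 2))).add
      ((((hx_comp 0).mul hv1).sub ((hx_comp 1).mul hv0)).const_mul (c * m / q))) ?_
  simp only [Pi.add_apply, Pi.pow_apply, Function.comp_apply]
  field_simp [hm.ne', hc.ne']
  linear_combination (-(2 * c * q)) * hangular

/-- For the mirror-trap magnetic field `B(x) = (-½a'(x₃)x₁, -½a'(x₃)x₂, a(x₃))` in a finite
cylinder and an axially symmetric potential `φ`, the function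
`I(x,v) = (a(x₃)/2)(x₁²+x₂²) + (cm/q)(x₁v₂ - x₂v₁)` is a first integral. -/
theorem stmt5 (r₀ l : ℝ) (hr₀ : 0 < r₀) (hl : 0 < l)
    (a a' : ℝ → ℝ) (ha : ∀ s ∈ Set.Icc (-l) l, HasDerivAt a (a' s) s)
    (φ : (Fin 3 → ℝ) → ℝ)
    (hsym : ∀ x y : Fin 3 → ℝ,
      x 0 ^ 2 + x 1 ^ 2 ≤ r₀ ^ 2 → y 0 ^ 2 + y 1 ^ 2 ≤ r₀ ^ 2 →
      x 2 ∈ Set.Icc (-l) l → y 2 ∈ Set.Icc (-l) l →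
      x 0 ^ 2 + x 1 ^ 2 = y 0 ^ 2 + y 1 ^ 2 → x 2 = y 2 → φ x = φ y)
    (φ' : (Fin 3 → ℝ) → (Fin 3 → ℝ) →L[ℝ] ℝ)
    (hφ : ∀ y : Fin 3 → ℝ, y 0 ^ 2 + y 1 ^ 2 < r₀ ^ 2 → y 2 ∈ Set.Ioo (-l) l →
      HasFDerivAt φ (φ' y) y)
    (q m c : ℝ) (hq : q ≠ 0) (hm : 0 < m) (hc : 0 < c)
    (x v : ℝ → (Fin 3 → ℝ)) (t : ℝ)
    (hxQ : x t 0 ^ 2 + x t 1 ^ 2 < r₀ ^ 2) (hxz : x t 2 ∈ Set.Ioo (-l) l)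
    (hx : HasDerivAt x (v t) t)
    (hv : HasDerivAt v
      (![-(q / m) * φ' (x t) (Pi.single 0 1)
          + q / (c * m) * (a (x t 2) * v t 1 + (1/2) * a' (x t 2) * x t 1 * v t 2),
         -(q / m) * φ' (x t) (Pi.single 1 1)
          + q / (c * m) * (-(a (x t 2) * v t 0) - (1/2) * a' (x t 2) * x t 0 * v t 2),
         -(q / m) * φ' (x t) (Pi.single 2 1)
          + q / (c * m) * ((1/2) * a' (x t 2) * (x t 0 * v t 1 - x t 1 * v t 0))]) t) :
    HasDerivAt (fun s => a (x s 2) / 2 * (x s 0 ^ 2 + x s 1 ^ 2)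
      + c * m / q * (x s 0 * v s 1 - x s 1 * v s 0)) 0 t :=
  stmt5_general r₀ l a a' ha φ hsym φ' hφ q m c hq hm hc x v t hxQ hxz hx hv
end

section
/- Let Q ⊂ ℝⁿ bounded, τ ∈ (0,1], α ∈ (0, τ²), and ρ̃ : Q̄ × ℝ → ℝ bounded and globally τ-Hölder continuous. Then the composition operator C^{0,τ}(Q̄) → C^{0,α}(Q̄), φ ↦ ρ̃(·, φ(·)), is continuous with respect to the Hölder norms. -/
/-!
With `f = φ₁ - φ₂` and `g = ρ̃(·, φ₁) - ρ̃(·, φ₂)`, the Hölder bound of `ρ̃` in its second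
variable gives `sup |g| ≤ c ‖f‖_{C⁰}^τ`. Composing τ-Hölder maps on a bounded set makes each
`ρ̃(·, φᵢ)` τ²-Hölder, with a constant `A` that stays bounded for `φ₂` near `φ₁`. Interpolating,
`|g x - g y| ≤ min (2 sup |g|) (A |x - y|^{τ²}) ≤ (2 sup |g|)^{1-θ} A^θ |x - y|^α` with
`θ = α / τ² < 1`, so `‖g‖_{C^{0,α}}` tends to `0` with `‖f‖_{C^{0,τ}}`.
-/

/-- Supremum norm of `f` over the set `s`. -/
noncomputable def supNorm {n : ℕ} (f : EuclideanSpace ℝ (Fin n) → ℝ)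
    (s : Set (EuclideanSpace ℝ (Fin n))) : ℝ :=
  sSup ((fun x => |f x|) '' s)

/-- Hölder seminorm `[f]_{C^{0,β}}` of `f` over the set `s`. -/
noncomputable def holderSemi {n : ℕ} (β : ℝ) (f : EuclideanSpace ℝ (Fin n) → ℝ)
    (s : Set (EuclideanSpace ℝ (Fin n))) : ℝ :=
  sSup {c | ∃ x ∈ s, ∃ y ∈ s, x ≠ y ∧ c = |f x - f y| / ‖x - y‖ ^ β}

/-- Hölder norm `‖f‖_{C^{0,β}} = ‖f‖_{C⁰} + [f]_{C^{0,β}}`. -/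
noncomputable def holderNorm {n : ℕ} (β : ℝ) (f : EuclideanSpace ℝ (Fin n) → ℝ)
    (s : Set (EuclideanSpace ℝ (Fin n))) : ℝ :=
  supNorm f s + holderSemi β f s

/-- `f` is `τ`-Hölder continuous on `s`. -/
def IsHolder {n : ℕ} (τ : ℝ) (f : EuclideanSpace ℝ (Fin n) → ℝ)
    (s : Set (EuclideanSpace ℝ (Fin n))) : Prop :=
  ∃ C : ℝ, ∀ x ∈ s, ∀ y ∈ s, |f x - f y| ≤ C * ‖x - y‖ ^ τ

open Bornology Metric Filter Topology

theorem min_le_rpow_mul_rpow {a b θ : ℝ} (ha : 0 ≤ a) (hb : 0 ≤ b) (hθ0 : 0 ≤ θ) (hθ1 : θ ≤ 1) :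
    min a b ≤ a ^ (1 - θ) * b ^ θ := by
  have hm : 0 ≤ min a b := le_min ha hb
  calc min a b = min a b ^ (1 - θ) * min a b ^ θ := by
        rw [← Real.rpow_add' hm (by norm_num), sub_add_cancel, Real.rpow_one]
    _ ≤ a ^ (1 - θ) * b ^ θ := by
        gcongr
        exacts [min_le_left a b, min_le_right a b]

theorem le_rpow_sub_mul_rpow {t D τ : ℝ} (ht : 0 ≤ t) (htD : t ≤ D) (hτ1 : τ ≤ 1) :
    t ≤ D ^ (1 - τ) * t ^ τ := by
  rcases ht.eq_or_lt with rfl | ht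
  · exact mul_nonneg (Real.rpow_nonneg htD _) (Real.rpow_nonneg le_rfl _)
  calc t = t ^ (1 - τ) * t ^ τ := by rw [← Real.rpow_add ht, sub_add_cancel, Real.rpow_one]
    _ ≤ D ^ (1 - τ) * t ^ τ := by gcongr

theorem sqrt_sq_add_sq_rpow_le {d v D K τ : ℝ} (hd : 0 ≤ d) (hdD : d ≤ D) (hK : 0 ≤ K)
    (hv : |v| ≤ K * d ^ τ) (hτ0 : 0 ≤ τ) (hτ1 : τ ≤ 1) :
    √(d ^ 2 + v ^ 2) ^ τ ≤ (D ^ (1 - τ) + K) ^ τ * d ^ (τ ^ 2) := by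
  have hsqrt : √(d ^ 2 + v ^ 2) ≤ d + |v| :=
    Real.sqrt_le_iff.mpr ⟨by positivity, by nlinarith [sq_abs v, abs_nonneg v]⟩
  have hlin : d + |v| ≤ (D ^ (1 - τ) + K) * d ^ τ := by
    linarith [le_rpow_sub_mul_rpow hd hdD hτ1]
  calc √(d ^ 2 + v ^ 2) ^ τ ≤ ((D ^ (1 - τ) + K) * d ^ τ) ^ τ := by
        gcongr; exact hsqrt.trans hlin
    _ = (D ^ (1 - τ) + K) ^ τ * d ^ (τ ^ 2) := by
        rw [Real.mul_rpow (by have := Real.rpow_nonneg (hd.trans hdD) (1 - τ); positivity)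
          (by positivity), ← Real.rpow_mul hd, sq]

section HolderNorm

variable {n : ℕ} {s : Set (EuclideanSpace ℝ (Fin n))} {f g : EuclideanSpace ℝ (Fin n) → ℝ}
  {β M : ℝ} {x y : EuclideanSpace ℝ (Fin n)}

theorem supNorm_nonneg (f : EuclideanSpace ℝ (Fin n) → ℝ) (s : Set (EuclideanSpace ℝ (Fin n))) :
    0 ≤ supNorm f s :=
  Real.sSup_nonneg <| by rintro _ ⟨x, -, rfl⟩; exact abs_nonneg _

theorem holderSemi_nonneg (β : ℝ) (f : EuclideanSpace ℝ (Fin n) → ℝ)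
    (s : Set (EuclideanSpace ℝ (Fin n))) : 0 ≤ holderSemi β f s :=
  Real.sSup_nonneg <| by rintro _ ⟨x, -, y, -, -, rfl⟩; positivity

theorem supNorm_le (hM : 0 ≤ M) (h : ∀ x ∈ s, |f x| ≤ M) : supNorm f s ≤ M :=
  Real.sSup_le (by rintro _ ⟨x, hx, rfl⟩; exact h x hx) hM

theorem holderSemi_le (hM : 0 ≤ M) (h : ∀ x ∈ s, ∀ y ∈ s, |f x - f y| ≤ M * ‖x - y‖ ^ β) :
    holderSemi β f s ≤ M := by
  refine Real.sSup_le ?_ hM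
  rintro _ ⟨x, hx, y, hy, hxy, rfl⟩
  rw [div_le_iff₀ (Real.rpow_pos_of_pos (norm_sub_pos_iff.mpr hxy) _)]
  exact h x hx y hy

theorem IsHolder.sub (hf : IsHolder β f s) (hg : IsHolder β g s) :
    IsHolder β (fun x => f x - g x) s := by
  obtain ⟨C, hC⟩ := hf
  obtain ⟨C', hC'⟩ := hg
  refine ⟨C + C', fun x hx y hy => ?_⟩
  calc |f x - g x - (f y - g y)| = |(f x - f y) - (g x - g y)| := by ring_nf
    _ ≤ |f x - f y| + |g x - g y| := abs_sub _ _
    _ ≤ (C + C') * ‖x - y‖ ^ β := by linarith [hC x hx y hy, hC' x hx y hy]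

theorem IsHolder.abs_sub_le (hf : IsHolder β f s) (hx : x ∈ s) (hy : y ∈ s) :
    |f x - f y| ≤ holderSemi β f s * ‖x - y‖ ^ β := by
  rcases eq_or_ne x y with rfl | hxy
  · simpa using mul_nonneg (holderSemi_nonneg β f s) (Real.rpow_nonneg le_rfl β)
  obtain ⟨C, hC⟩ := hf
  have hpos : 0 < ‖x - y‖ ^ β := Real.rpow_pos_of_pos (norm_sub_pos_iff.mpr hxy) _
  have hbdd : BddAbove {c | ∃ x ∈ s, ∃ y ∈ s, x ≠ y ∧ c = |f x - f y| / ‖x - y‖ ^ β} := by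
    refine ⟨C, ?_⟩
    rintro _ ⟨a, ha, b, hb, hab, rfl⟩
    rw [div_le_iff₀ (Real.rpow_pos_of_pos (norm_sub_pos_iff.mpr hab) _)]
    exact hC a ha b hb
  rw [← div_le_iff₀ hpos]
  exact le_csSup hbdd ⟨x, hx, y, hy, hxy, rfl⟩

theorem IsHolder.abs_le_supNorm (hf : IsHolder β f s) (hs : IsBounded s) (hβ : 0 ≤ β)
    (hx : x ∈ s) : |f x| ≤ supNorm f s := by
  refine le_csSup ⟨|f x| + holderSemi β f s * diam s ^ β, ?_⟩ ⟨x, hx, rfl⟩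
  rintro _ ⟨z, hz, rfl⟩
  have hdist : ‖z - x‖ ^ β ≤ diam s ^ β := by
    gcongr; rw [← dist_eq_norm]; exact dist_le_diam_of_mem hs hz hx
  have := mul_le_mul_of_nonneg_left hdist (holderSemi_nonneg β f s)
  dsimp only
  linarith [abs_sub_abs_le_abs_sub (f z) (f x), hf.abs_sub_le hz hx]

theorem IsHolder.abs_le_of_holderNorm_le (hf : IsHolder β f s) (hs : IsBounded s) (hβ : 0 ≤ β)
    (h : holderNorm β f s ≤ M) (hx : x ∈ s) : |f x| ≤ M := by
  unfold holderNorm at h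
  linarith [hf.abs_le_supNorm hs hβ hx, holderSemi_nonneg β f s]

theorem IsHolder.abs_sub_le_of_holderNorm_le (hf : IsHolder β f s) (h : holderNorm β f s ≤ M)
    (hx : x ∈ s) (hy : y ∈ s) : |f x - f y| ≤ M * ‖x - y‖ ^ β := by
  unfold holderNorm at h
  have := supNorm_nonneg f s
  exact (hf.abs_sub_le hx hy).trans (by gcongr; linarith)

theorem holderSemi_le_interpolate {α γ A : ℝ} (hα : 0 ≤ α) (hαγ : α ≤ γ) (hγ : 0 < γ)
    (hM0 : 0 ≤ M) (hM : ∀ x ∈ s, |g x| ≤ M) (hA0 : 0 ≤ A)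
    (hA : ∀ x ∈ s, ∀ y ∈ s, |g x - g y| ≤ A * ‖x - y‖ ^ γ) :
    holderSemi α g s ≤ (2 * M) ^ (1 - α / γ) * A ^ (α / γ) := by
  have hθ0 : 0 ≤ α / γ := div_nonneg hα hγ.le
  have hθ1 : α / γ ≤ 1 := (div_le_one hγ).mpr hαγ
  have h2M : 0 ≤ 2 * M := by positivity
  refine holderSemi_le (by positivity) fun x hx y hy => ?_
  have hsup : |g x - g y| ≤ 2 * M := by
    linarith [abs_sub (g x) (g y), hM x hx, hM y hy]
  calc |g x - g y| ≤ min (2 * M) (A * ‖x - y‖ ^ γ) := le_min hsup (hA x hx y hy)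
    _ ≤ (2 * M) ^ (1 - α / γ) * (A * ‖x - y‖ ^ γ) ^ (α / γ) :=
        min_le_rpow_mul_rpow h2M (by positivity) hθ0 hθ1
    _ = (2 * M) ^ (1 - α / γ) * A ^ (α / γ) * ‖x - y‖ ^ α := by
        rw [Real.mul_rpow hA0 (by positivity), ← Real.rpow_mul (norm_nonneg _),
          mul_div_cancel₀ α hγ.ne', mul_assoc]

end HolderNorm

section Composition

variable {n : ℕ} {s : Set (EuclideanSpace ℝ (Fin n))} {ρ : EuclideanSpace ℝ (Fin n) → ℝ → ℝ}
  {c τ : ℝ}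

def HolderOnProdWith (c τ : ℝ) (ρ : EuclideanSpace ℝ (Fin n) → ℝ → ℝ)
    (s : Set (EuclideanSpace ℝ (Fin n))) : Prop :=
  ∀ x ∈ s, ∀ y ∈ s, ∀ u w : ℝ, |ρ x u - ρ y w| ≤ c * √(‖x - y‖ ^ 2 + (u - w) ^ 2) ^ τ

theorem HolderOnProdWith.abs_sub_le (hρ : HolderOnProdWith c τ ρ s) {x : EuclideanSpace ℝ (Fin n)}
    (hx : x ∈ s) (u w : ℝ) : |ρ x u - ρ x w| ≤ c * |u - w| ^ τ := by
  simpa [Real.sqrt_sq_eq_abs] using hρ x hx x hx u w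

theorem HolderOnProdWith.abs_comp_sub_comp_le (hρ : HolderOnProdWith c τ ρ s) (hc : 0 ≤ c)
    (hτ0 : 0 ≤ τ) (hτ1 : τ ≤ 1) {φ : EuclideanSpace ℝ (Fin n) → ℝ} {D K : ℝ} (hK : 0 ≤ K)
    {x y : EuclideanSpace ℝ (Fin n)} (hx : x ∈ s) (hy : y ∈ s) (hD : ‖x - y‖ ≤ D)
    (hφ : |φ x - φ y| ≤ K * ‖x - y‖ ^ τ) :
    |ρ x (φ x) - ρ y (φ y)| ≤ c * (D ^ (1 - τ) + K) ^ τ * ‖x - y‖ ^ (τ ^ 2) := by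
  rw [mul_assoc]
  exact (hρ x hx y hy _ _).trans
    (by gcongr; exact sqrt_sq_add_sq_rpow_le (norm_nonneg _) hD hK hφ hτ0 hτ1)

theorem HolderOnProdWith.holderNorm_comp_sub_comp_le (hρ : HolderOnProdWith c τ ρ s) (hc : 0 ≤ c)
    (hs : IsBounded s) (hτ0 : 0 < τ) (hτ1 : τ ≤ 1) {α : ℝ} (hα : 0 ≤ α) (hατ : α ≤ τ ^ 2)
    {φ₁ φ₂ : EuclideanSpace ℝ (Fin n) → ℝ} (hφ₁ : IsHolder τ φ₁ s) (hφ₂ : IsHolder τ φ₂ s)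
    {δ : ℝ} (hδ1 : δ ≤ 1) (hδ : holderNorm τ (fun x => φ₁ x - φ₂ x) s ≤ δ) :
    holderNorm α (fun x => ρ x (φ₁ x) - ρ x (φ₂ x)) s ≤
      c * δ ^ τ + (2 * (c * δ ^ τ)) ^ (1 - α / τ ^ 2) *
        (2 * c * (diam s ^ (1 - τ) + (holderSemi τ φ₁ s + 1)) ^ τ) ^ (α / τ ^ 2) := by
  have hf := hφ₁.sub hφ₂
  set K := holderSemi τ φ₁ s + 1
  have hK : 0 ≤ K := by have := holderSemi_nonneg τ φ₁ s; positivity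
  have hδ0 : 0 ≤ δ := (add_nonneg (supNorm_nonneg _ _) (holderSemi_nonneg _ _ _)).trans hδ
  have h₁ : ∀ x ∈ s, ∀ y ∈ s, |φ₁ x - φ₁ y| ≤ K * ‖x - y‖ ^ τ := fun x hx y hy =>
    (hφ₁.abs_sub_le hx hy).trans (by gcongr; linarith)
  have h₂ : ∀ x ∈ s, ∀ y ∈ s, |φ₂ x - φ₂ y| ≤ K * ‖x - y‖ ^ τ := fun x hx y hy => by
    calc |φ₂ x - φ₂ y| = |(φ₁ x - φ₁ y) - (φ₁ x - φ₂ x - (φ₁ y - φ₂ y))| := by ring_nf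
      _ ≤ |φ₁ x - φ₁ y| + |φ₁ x - φ₂ x - (φ₁ y - φ₂ y)| := abs_sub _ _
      _ ≤ holderSemi τ φ₁ s * ‖x - y‖ ^ τ + δ * ‖x - y‖ ^ τ :=
        add_le_add (hφ₁.abs_sub_le hx hy) (hf.abs_sub_le_of_holderNorm_le hδ hx hy)
      _ ≤ K * ‖x - y‖ ^ τ := by rw [add_mul]; gcongr
  have hsup : ∀ x ∈ s, |ρ x (φ₁ x) - ρ x (φ₂ x)| ≤ c * δ ^ τ := fun x hx =>
    (hρ.abs_sub_le hx _ _).trans (by gcongr; exact hf.abs_le_of_holderNorm_le hs hτ0.le hδ hx)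
  have hpair : ∀ x ∈ s, ∀ y ∈ s, |ρ x (φ₁ x) - ρ x (φ₂ x) - (ρ y (φ₁ y) - ρ y (φ₂ y))| ≤
      2 * c * (diam s ^ (1 - τ) + K) ^ τ * ‖x - y‖ ^ (τ ^ 2) := fun x hx y hy => by
    have hD : ‖x - y‖ ≤ diam s := by rw [← dist_eq_norm]; exact dist_le_diam_of_mem hs hx hy
    calc _ = |(ρ x (φ₁ x) - ρ y (φ₁ y)) - (ρ x (φ₂ x) - ρ y (φ₂ y))| := by ring_nf
      _ ≤ |ρ x (φ₁ x) - ρ y (φ₁ y)| + |ρ x (φ₂ x) - ρ y (φ₂ y)| := abs_sub _ _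
      _ ≤ _ := add_le_add (hρ.abs_comp_sub_comp_le hc hτ0.le hτ1 hK hx hy hD (h₁ x hx y hy))
        (hρ.abs_comp_sub_comp_le hc hτ0.le hτ1 hK hx hy hD (h₂ x hx y hy))
      _ = _ := by ring
  have hdiam : 0 ≤ diam s ^ (1 - τ) := Real.rpow_nonneg diam_nonneg _
  exact add_le_add (supNorm_le (by positivity) hsup)
    (holderSemi_le_interpolate hα hατ (by positivity) (by positivity) hsup (by positivity) hpair)

end Composition

theorem stmt12_general (n : ℕ) (Q : Set (EuclideanSpace ℝ (Fin n)))
    (hQbdd : Bornology.IsBounded Q)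
    (τ α : ℝ) (hτ0 : 0 < τ) (hτ1 : τ ≤ 1) (hα : 0 < α) (hατ : α < τ ^ 2)
    (ρ : EuclideanSpace ℝ (Fin n) → ℝ → ℝ) (ctil : ℝ)
    (hhold : ∀ x ∈ closure Q, ∀ y ∈ closure Q, ∀ u w : ℝ,
      |ρ x u - ρ y w| ≤ ctil * Real.sqrt (‖x - y‖ ^ 2 + (u - w) ^ 2) ^ τ) :
    ∀ φ₁ : EuclideanSpace ℝ (Fin n) → ℝ, IsHolder τ φ₁ (closure Q) →
    ∀ ε > (0:ℝ), ∃ δ > (0:ℝ), ∀ φ₂ : EuclideanSpace ℝ (Fin n) → ℝ,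
      IsHolder τ φ₂ (closure Q) →
      holderNorm τ (fun x => φ₁ x - φ₂ x) (closure Q) ≤ δ →
      holderNorm α (fun x => ρ x (φ₁ x) - ρ x (φ₂ x)) (closure Q) ≤ ε := by
  intro φ₁ hφ₁ ε hε
  set c := max ctil 0
  have hρ : HolderOnProdWith c τ ρ (closure Q) := fun x hx y hy u w =>
    (hhold x hx y hy u w).trans (by gcongr; exact le_max_left _ _)
  set θ := α / τ ^ 2
  set A := 2 * c * (diam (closure Q) ^ (1 - τ) + (holderSemi τ φ₁ (closure Q) + 1)) ^ τ
  set F : ℝ → ℝ := fun δ => c * δ ^ τ + (2 * (c * δ ^ τ)) ^ (1 - θ) * A ^ θ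
  have hθ1 : θ < 1 := (div_lt_one (by positivity)).mpr hατ
  have hF : Continuous F := by
    have hpow : Continuous fun δ : ℝ => c * δ ^ τ :=
      (Real.continuous_rpow_const hτ0.le).const_mul c
    exact hpow.add (((hpow.const_mul 2).rpow_const fun _ => Or.inr (by linarith)).mul
      continuous_const)
  have hF0 : F 0 = 0 := by
    simp [F, Real.zero_rpow hτ0.ne', Real.zero_rpow (sub_ne_zero.mpr hθ1.ne')]
  have hsmall : ∀ᶠ δ in 𝓝[>] 0, F δ < ε ∧ δ < 1 := nhdsWithin_le_nhds <|
    ((hF.tendsto 0).eventually (gt_mem_nhds (show F 0 < ε by rwa [hF0]))).and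
      (gt_mem_nhds one_pos)
  obtain ⟨δ, ⟨hFδ, hδ1⟩, hδ0⟩ := (hsmall.and self_mem_nhdsWithin).exists
  exact ⟨δ, hδ0, fun φ₂ hφ₂ hδ => (hρ.holderNorm_comp_sub_comp_le (le_max_right _ _)
    hQbdd.closure hτ0 hτ1 hα.le hατ.le hφ₁ hφ₂ hδ1.le hδ).trans hFδ.le⟩

/-- Continuity of the composition operator `C^{0,τ}(Q̄) → C^{0,α}(Q̄)`,
`φ ↦ ρ̃(·, φ(·))`, for `α ∈ (0, τ²)` and `ρ̃` bounded and globally `τ`-Hölder. -/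
theorem stmt12 (n : ℕ) (Q : Set (EuclideanSpace ℝ (Fin n)))
    (hQbdd : Bornology.IsBounded Q)
    (τ α : ℝ) (hτ0 : 0 < τ) (hτ1 : τ ≤ 1) (hα : 0 < α) (hατ : α < τ ^ 2)
    (ρ : EuclideanSpace ℝ (Fin n) → ℝ → ℝ) (Cb ctil : ℝ)
    (hbd : ∀ x u, |ρ x u| ≤ Cb)
    (hhold : ∀ x ∈ closure Q, ∀ y ∈ closure Q, ∀ u w : ℝ,
      |ρ x u - ρ y w| ≤ ctil * Real.sqrt (‖x - y‖ ^ 2 + (u - w) ^ 2) ^ τ) :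
    ∀ φ₁ : EuclideanSpace ℝ (Fin n) → ℝ, IsHolder τ φ₁ (closure Q) →
    ∀ ε > (0:ℝ), ∃ δ > (0:ℝ), ∀ φ₂ : EuclideanSpace ℝ (Fin n) → ℝ,
      IsHolder τ φ₂ (closure Q) →
      holderNorm τ (fun x => φ₁ x - φ₂ x) (closure Q) ≤ δ →
      holderNorm α (fun x => ρ x (φ₁ x) - ρ x (φ₂ x)) (closure Q) ≤ ε :=
  stmt12_general n Q hQbdd τ α hτ0 hτ1 hα hατ ρ ctil hhold
end
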